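/- For every φ-clip (W,R), the pair σ_φ(W,R) is again a φ-clip, and σ_φ(W,R) ≪_φ (W,R), i.e., its set of worlds is included in W and its relation is included in R. -/
import Mathlib


/-- Formulas of unimodal modal logic. -/
inductive Formula : Type
  | atom : ℕ → Formula
  | falsum : Formula
  | neg : Formula → Formula
  | and : Formula → Formula → Formula
  | box : Formula → Formula
deriving DecidableEq

/-- Material implication, as the usual classical abbreviation. -/
def Formula.imp (φ ψ : Formula) : Formula := .neg (.and φ (.neg ψ))

/-- Disjunction, as the usual classical abbreviation. -/
def Formula.or (φ ψ : Formula) : Formula := .neg (.and (.neg φ) (.neg ψ))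

/-- Uniform substitution of formulas for atoms. -/
def fsubst (σ : ℕ → Formula) : Formula → Formula
  | .atom q => σ q
  | .falsum => .falsum
  | .neg φ => .neg (fsubst σ φ)
  | .and φ ψ => .and (fsubst σ φ) (fsubst σ ψ)
  | .box φ => .box (fsubst σ φ)

/-- A Boolean valuation of the modal language: a Boolean assignment respecting
`⊥`, `¬` and `∧` (boxed formulas are treated as atoms). -/
def IsBoolVal (v : Formula → Bool) : Prop :=
  v .falsum = false ∧ (∀ φ, v (.neg φ) = !(v φ)) ∧
  (∀ φ ψ, v (.and φ ψ) = (v φ && v ψ))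

/-- Classical propositional tautologies of the modal language. -/
def Tautology (φ : Formula) : Prop := ∀ v, IsBoolVal v → v φ = true

/-- A modal logic: a set of formulas closed under uniform substitution and modus
ponens, containing all classical propositional tautologies, containing the axioms
`□p∧□q→□(p∧q)` and `□⊤`, and closed under the rule: from `φ→ψ` infer `□φ→□ψ`. -/
structure IsModalLogic (L : Set Formula) : Prop where
  taut : ∀ φ, Tautology φ → φ ∈ L
  mp : ∀ φ ψ, Formula.imp φ ψ ∈ L → φ ∈ L → ψ ∈ L
  subst : ∀ φ σ, φ ∈ L → fsubst σ φ ∈ L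
  axK : Formula.imp (.and (.box (.atom 0)) (.box (.atom 1)))
          (.box (.and (.atom 0) (.atom 1))) ∈ L
  axTop : Formula.box (.neg .falsum) ∈ L
  mono : ∀ φ ψ, Formula.imp φ ψ ∈ L → Formula.imp (.box φ) (.box ψ) ∈ L

/-- An `L`-theory: a set of formulas containing `L` and closed under modus ponens. -/
def IsTheory (L Γ : Set Formula) : Prop :=
  L ⊆ Γ ∧ ∀ φ ψ, Formula.imp φ ψ ∈ Γ → φ ∈ Γ → ψ ∈ Γ

/-- A prime `L`-theory: a proper `L`-theory `Γ` (i.e. `⊥ ∉ Γ`) such that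
`φ∨ψ ∈ Γ` implies `φ ∈ Γ` or `ψ ∈ Γ`. -/
def IsPrime (L Γ : Set Formula) : Prop :=
  IsTheory L Γ ∧ Formula.falsum ∉ Γ ∧
  ∀ φ ψ, Formula.or φ ψ ∈ Γ → φ ∈ Γ ∨ ψ ∈ Γ

/-- `□Γ := {φ : □φ ∈ Γ}`. -/
def boxInv (Γ : Set Formula) : Set Formula := {φ | Formula.box φ ∈ Γ}

/-- `KDe`: the least modal logic containing `□□p → □p`. -/
def KDe : Set Formula :=
  ⋂₀ {L : Set Formula |
        IsModalLogic L ∧ Formula.imp (.box (.box (.atom 0))) (.box (.atom 0)) ∈ L}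

/-- The set of subformulas of a formula. -/
def Subf : Formula → Set Formula
  | .atom p => {.atom p}
  | .falsum => {.falsum}
  | .neg φ => insert (.neg φ) (Subf φ)
  | .and φ ψ => insert (.and φ ψ) (Subf φ ∪ Subf ψ)
  | .box φ => insert (.box φ) (Subf φ)

/-- `ψs` is an admissible enumeration of the subformulas of `φ`: it enumerates
`Σ_φ` without repetition, and components of a subformula come earlier. -/
def IsEnum (φ : Formula) {n : ℕ} (ψs : Fin n → Formula) : Prop :=
  Function.Injective ψs ∧ Set.range ψs = Subf φ ∧
  (∀ i j : Fin n, ψs i = .neg (ψs j) → j < i) ∧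
  (∀ i j k : Fin n, ψs i = .and (ψs j) (ψs k) → j < i ∧ k < i) ∧
  (∀ i j : Fin n, ψs i = .box (ψs j) → j < i)

/-- A `φ`-tip: a tuple of bits respecting the Boolean structure of the enumerated
subformulas. -/
def IsTip {n : ℕ} (ψs : Fin n → Formula) (a : Fin n → Bool) : Prop :=
  (∀ i : Fin n, ψs i = .falsum → a i = false) ∧
  (∀ i j : Fin n, ψs i = .neg (ψs j) → a i = !(a j)) ∧
  (∀ i j k : Fin n, ψs i = .and (ψs j) (ψs k) → a i = (a j && a k))

/-- `W⁰`: the set of all `φ`-tips. -/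
def tips {n : ℕ} (ψs : Fin n → Formula) : Set (Fin n → Bool) := {a | IsTip ψs a}

/-- `R⁰`: the relation on `W⁰` with `a R⁰ b` iff whenever `ψ_i = □ψ_j` and `a_i = 1`
then `b_j = 1`. -/
def R0 {n : ℕ} (ψs : Fin n → Formula) (a b : Fin n → Bool) : Prop :=
  a ∈ tips ψs ∧ b ∈ tips ψs ∧
  ∀ i j : Fin n, ψs i = .box (ψs j) → a i = true → b j = true

open Classical in
/-- `τ_φ(s)`: the tuple of bits recording which enumerated subformulas belong to the
theory `s`. -/
noncomputable def tipOf {n : ℕ} (ψs : Fin n → Formula) (s : Set Formula) :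
    Fin n → Bool :=
  fun i => if ψs i ∈ s then true else false

/-- A `φ`-clip: `(W,R)` with `W ⊆ W⁰`, `R` a relation on `W` included in `R⁰`,
containing the tips of all prime `KDe`-theories and the `R`-edges coming from
the canonical relation between prime `KDe`-theories. -/
structure IsClip {n : ℕ} (ψs : Fin n → Formula)
    (W : Set (Fin n → Bool)) (R : (Fin n → Bool) → (Fin n → Bool) → Prop) : Prop where
  wsub : W ⊆ tips ψs
  rmem : ∀ a b, R a b → a ∈ W ∧ b ∈ W
  rsub : ∀ a b, R a b → R0 ψs a b
  tmem : ∀ s : Set Formula, IsPrime KDe s → tipOf ψs s ∈ W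
  tedge : ∀ s t : Set Formula, IsPrime KDe s → IsPrime KDe t → boxInv s ⊆ t →
    R (tipOf ψs s) (tipOf ψs t)

/-- The set of worlds of `σ_φ(W,R)`. -/
def sigmaW {n : ℕ} (ψs : Fin n → Formula) (W : Set (Fin n → Bool))
    (R : (Fin n → Bool) → (Fin n → Bool) → Prop) : Set (Fin n → Bool) :=
  {a | a ∈ W ∧ ∀ i j : Fin n, ψs i = .box (ψs j) → a i = false →
         ∃ b ∈ W, R a b ∧ b j = false}

/-- The relation of `σ_φ(W,R)`: `a R' b` iff `a, b` survive in `σ_φ(W,R)`, `a R b`,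
and there is `c ∈ W` with `a R c` and `c R b`. -/
def sigmaR {n : ℕ} (ψs : Fin n → Formula) (W : Set (Fin n → Bool))
    (R : (Fin n → Bool) → (Fin n → Bool) → Prop) :
    (Fin n → Bool) → (Fin n → Bool) → Prop :=
  fun a b => a ∈ sigmaW ψs W R ∧ b ∈ sigmaW ψs W R ∧ R a b ∧
    ∃ c ∈ W, R a c ∧ R c b

/-- `σ_φ` as an operation on pairs `(W,R)`. -/
def sigmaPair {n : ℕ} (ψs : Fin n → Formula) :
    Set (Fin n → Bool) × ((Fin n → Bool) → (Fin n → Bool) → Prop) →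
    Set (Fin n → Bool) × ((Fin n → Bool) → (Fin n → Bool) → Prop) :=
  fun X => (sigmaW ψs X.1 X.2, sigmaR ψs X.1 X.2)

/-- The initial pair `(W⁰, R⁰)`. -/
def X0 {n : ℕ} (ψs : Fin n → Formula) :
    Set (Fin n → Bool) × ((Fin n → Bool) → (Fin n → Bool) → Prop) :=
  (tips ψs, R0 ψs)

section Aux

open Formula

/-! ### Valuation lemmas -/

lemma val_neg {v : Formula → Bool} (hv : IsBoolVal v) (φ : Formula) :
    (v (.neg φ) = true) ↔ ¬ (v φ = true) := by
  cases h : v φ <;> simp [hv.2.1, h]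

lemma val_and {v : Formula → Bool} (hv : IsBoolVal v) (φ ψ : Formula) :
    (v (.and φ ψ) = true) ↔ (v φ = true ∧ v ψ = true) := by
  simp [hv.2.2]

lemma val_imp {v : Formula → Bool} (hv : IsBoolVal v) (φ ψ : Formula) :
    (v (Formula.imp φ ψ) = true) ↔ ((v φ = true) → (v ψ = true)) := by
  simp only [Formula.imp, val_neg hv, val_and hv]
  tauto

lemma val_or {v : Formula → Bool} (hv : IsBoolVal v) (φ ψ : Formula) :
    (v (Formula.or φ ψ) = true) ↔ (v φ = true ∨ v ψ = true) := by
  simp only [Formula.or, val_neg hv, val_and hv]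
  tauto

/-! ### KDe basics -/

lemma taut_mem {φ : Formula} (h : Tautology φ) : φ ∈ KDe :=
  Set.mem_sInter.2 fun _ hL => hL.1.taut _ h

lemma KDe_mp {φ ψ : Formula} (h : Formula.imp φ ψ ∈ KDe) (h2 : φ ∈ KDe) : ψ ∈ KDe :=
  Set.mem_sInter.2 fun L hL =>
    hL.1.mp _ _ (Set.mem_sInter.1 h L hL) (Set.mem_sInter.1 h2 L hL)

lemma KDe_mono {φ ψ : Formula} (h : Formula.imp φ ψ ∈ KDe) :
    Formula.imp (.box φ) (.box ψ) ∈ KDe :=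
  Set.mem_sInter.2 fun L hL => hL.1.mono _ _ (Set.mem_sInter.1 h L hL)

lemma KDe_axK' (φ ψ : Formula) :
    Formula.imp (.and (.box φ) (.box ψ)) (.box (.and φ ψ)) ∈ KDe :=
  Set.mem_sInter.2 fun L hL => by
    have := hL.1.subst _ (fun k => match k with | 0 => φ | _ => ψ) hL.1.axK
    exact this

lemma KDe_dense (χ : Formula) :
    Formula.imp (.box (.box χ)) (.box χ) ∈ KDe :=
  Set.mem_sInter.2 fun L hL => by
    have := hL.1.subst _ (fun _ => χ) hL.2
    exact this

lemma KDe_top : Formula.box (.neg .falsum) ∈ KDe :=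
  Set.mem_sInter.2 fun _ hL => hL.1.axTop

/-! ### Tautologies -/

lemma tId (φ : Formula) : Formula.imp φ φ ∈ KDe :=
  taut_mem (fun v hv => (val_imp hv φ φ).2 id)

lemma tK (φ ψ : Formula) : Formula.imp ψ (Formula.imp φ ψ) ∈ KDe :=
  taut_mem (fun v hv => by simp only [val_imp hv]; tauto)

lemma tFrege (φ α β : Formula) :
    Formula.imp (Formula.imp φ (Formula.imp α β))
      (Formula.imp (Formula.imp φ α) (Formula.imp φ β)) ∈ KDe :=
  taut_mem (fun v hv => by simp only [val_imp hv]; tauto)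

lemma tOrE (a b c : Formula) :
    Formula.imp (Formula.imp a c)
      (Formula.imp (Formula.imp b c) (Formula.imp (Formula.or a b) c)) ∈ KDe :=
  taut_mem (fun v hv => by simp only [val_imp hv, val_or hv]; tauto)

lemma tOr1 (a b : Formula) : Formula.imp a (Formula.or a b) ∈ KDe :=
  taut_mem (fun v hv => by simp only [val_imp hv, val_or hv]; tauto)

lemma tOr2 (a b : Formula) : Formula.imp b (Formula.or a b) ∈ KDe :=
  taut_mem (fun v hv => by simp only [val_imp hv, val_or hv]; tauto)

lemma tEfq (a : Formula) : Formula.imp .falsum a ∈ KDe :=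
  taut_mem (fun v hv => by
    simp only [val_imp hv]
    intro h; rw [hv.1] at h; cases h)

lemma tAndI (a b : Formula) :
    Formula.imp a (Formula.imp b (Formula.and a b)) ∈ KDe :=
  taut_mem (fun v hv => by simp only [val_imp hv, val_and hv]; tauto)

lemma tAndImp (φ ψ : Formula) :
    Formula.imp (.and (Formula.imp φ ψ) φ) ψ ∈ KDe :=
  taut_mem (fun v hv => by simp only [val_imp hv, val_and hv]; tauto)

lemma tComp (x y z : Formula) :
    Formula.imp (Formula.imp x y)
      (Formula.imp (Formula.imp y z) (Formula.imp x z)) ∈ KDe :=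
  taut_mem (fun v hv => by simp only [val_imp hv]; tauto)

/-! ### Necessitation and boxInv -/

lemma KDe_nec {φ : Formula} (h : φ ∈ KDe) : Formula.box φ ∈ KDe := by
  have h1 : Formula.imp (.neg .falsum) φ ∈ KDe := KDe_mp (tK (.neg .falsum) φ) h
  exact KDe_mp (KDe_mono h1) KDe_top

lemma boxInv_isTheory {Γ : Set Formula} (hΓ : IsTheory KDe Γ) :
    IsTheory KDe (boxInv Γ) := by
  constructor
  · intro χ hχ
    exact hΓ.1 (KDe_nec hχ)
  · intro α β h1 h2
    have h1' : Formula.box (Formula.imp α β) ∈ Γ := h1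
    have h2' : Formula.box α ∈ Γ := h2
    have hand : Formula.and (.box (Formula.imp α β)) (.box α) ∈ Γ :=
      hΓ.2 _ _ (hΓ.2 _ _ (hΓ.1 (tAndI _ _)) h1') h2'
    have hbx : Formula.box (.and (Formula.imp α β) α) ∈ Γ :=
      hΓ.2 _ _ (hΓ.1 (KDe_axK' (Formula.imp α β) α)) hand
    exact hΓ.2 _ _ (hΓ.1 (KDe_mono (tAndImp α β))) hbx

/-! ### Prime extension -/

lemma prime_extension {Γ : Set Formula} (hΓ : IsTheory KDe Γ) (D : Set Formula)
    (hDor : ∀ a ∈ D, ∀ b ∈ D, Formula.or a b ∈ D) (hDne : D.Nonempty)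
    (hdisj : ∀ a ∈ D, a ∉ Γ) :
    ∃ t, IsPrime KDe t ∧ Γ ⊆ t ∧ ∀ a ∈ D, a ∉ t := by
  have hZ := zorn_subset_nonempty
      {Δ : Set Formula | IsTheory KDe Δ ∧ Γ ⊆ Δ ∧ ∀ a ∈ D, a ∉ Δ} ?_
      Γ ⟨hΓ, subset_rfl, hdisj⟩
  · obtain ⟨m, hΓm, hmax⟩ := hZ
    obtain ⟨hmth, hmΓ, hmD⟩ := hmax.1
    have claim : ∀ χ : Formula, χ ∉ m → ∃ d ∈ D, Formula.imp χ d ∈ m := by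
      intro χ hχ
      by_contra hno
      push_neg at hno
      have hsub : m ⊆ {α | Formula.imp χ α ∈ m} := fun α hα =>
        hmth.2 _ _ (hmth.1 (tK χ α)) hα
      have hm'S : {α | Formula.imp χ α ∈ m} ∈
          {Δ : Set Formula | IsTheory KDe Δ ∧ Γ ⊆ Δ ∧ ∀ a ∈ D, a ∉ Δ} := by
        refine ⟨⟨fun α hα => hsub (hmth.1 hα), fun α β h1 h2 =>
          hmth.2 _ _ (hmth.2 _ _ (hmth.1 (tFrege χ α β)) h1) h2⟩,
          hmΓ.trans hsub, fun d hd hdm' => hno d hd hdm'⟩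
      have hle := hmax.2 hm'S hsub
      exact hχ (hle (show χ ∈ {α | Formula.imp χ α ∈ m} from hmth.1 (tId χ)))
    refine ⟨m, ⟨hmth, ?_, ?_⟩, hΓm, hmD⟩
    · intro hbot
      obtain ⟨d, hd⟩ := hDne
      exact hmD d hd (hmth.2 _ _ (hmth.1 (tEfq d)) hbot)
    · intro α β hor
      by_contra hcon
      push_neg at hcon
      obtain ⟨d1, hd1, h1⟩ := claim α hcon.1
      obtain ⟨d2, hd2, h2⟩ := claim β hcon.2
      have m1 : Formula.imp α (Formula.or d1 d2) ∈ m :=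
        hmth.2 _ _ (hmth.2 _ _ (hmth.1 (tComp α d1 (Formula.or d1 d2))) h1)
          (hmth.1 (tOr1 d1 d2))
      have m2 : Formula.imp β (Formula.or d1 d2) ∈ m :=
        hmth.2 _ _ (hmth.2 _ _ (hmth.1 (tComp β d2 (Formula.or d1 d2))) h2)
          (hmth.1 (tOr2 d1 d2))
      have hfin : Formula.or d1 d2 ∈ m :=
        hmth.2 _ _ (hmth.2 _ _ (hmth.2 _ _ (hmth.1 (tOrE α β (Formula.or d1 d2))) m1) m2) hor
      exact hmD _ (hDor d1 hd1 d2 hd2) hfin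
  · rintro c hcS hchain ⟨Δ0, hΔ0⟩
    refine ⟨⋃₀ c, ⟨⟨?_, ?_⟩, ?_, ?_⟩, fun s hs => Set.subset_sUnion_of_mem hs⟩
    · intro χ hχ; exact ⟨Δ0, hΔ0, (hcS hΔ0).1.1 hχ⟩
    · rintro α β ⟨Δ1, hm1, h1⟩ ⟨Δ2, hm2, h2⟩
      rcases eq_or_ne Δ1 Δ2 with rfl | hne
      · exact ⟨Δ1, hm1, (hcS hm1).1.2 _ _ h1 h2⟩
      · rcases hchain hm1 hm2 hne with h | h
        · exact ⟨Δ2, hm2, (hcS hm2).1.2 _ _ (h h1) h2⟩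
        · exact ⟨Δ1, hm1, (hcS hm1).1.2 _ _ h1 (h h2)⟩
    · exact fun χ hχ => ⟨Δ0, hΔ0, (hcS hΔ0).2.1 hχ⟩
    · rintro a ha ⟨Δ1, hm1, h1⟩
      exact (hcS hm1).2.2 a ha h1

/-! ### Or-closure -/

inductive OrCl (S : Set Formula) : Formula → Prop
  | base {φ} : φ ∈ S → OrCl S φ
  | or {φ ψ} : OrCl S φ → OrCl S ψ → OrCl S (Formula.or φ ψ)

lemma exists_prime_not {s : Set Formula} (hs : IsPrime KDe s) (χ : Formula)
    (hχ : Formula.box χ ∉ s) :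
    ∃ t, IsPrime KDe t ∧ boxInv s ⊆ t ∧ χ ∉ t := by
  have key : ∀ a, OrCl {χ} a → Formula.imp a χ ∈ KDe := by
    intro a ha
    induction ha with
    | base h => rw [Set.mem_singleton_iff] at h; rw [h]; exact tId χ
    | or h1 h2 ih1 ih2 => exact KDe_mp (KDe_mp (tOrE _ _ χ) ih1) ih2
  have hdisj : ∀ a ∈ setOf (OrCl {χ}), a ∉ boxInv s := by
    intro a ha hmem
    have h1 : Formula.box a ∈ s := hmem
    exact hχ (hs.1.2 _ _ (hs.1.1 (KDe_mono (key a ha))) h1)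
  obtain ⟨t, hp, hsub, hav⟩ := prime_extension (boxInv_isTheory hs.1)
    (setOf (OrCl {χ})) (fun a ha b hb => OrCl.or ha hb) ⟨χ, OrCl.base rfl⟩ hdisj
  exact ⟨t, hp, hsub, hav χ (OrCl.base rfl)⟩

lemma exists_prime_between {s t : Set Formula} (hs : IsPrime KDe s)
    (ht : IsPrime KDe t) (hst : boxInv s ⊆ t) :
    ∃ u, IsPrime KDe u ∧ boxInv s ⊆ u ∧ boxInv u ⊆ t := by
  have key : ∀ a, OrCl {α | ∃ χ, χ ∉ t ∧ α = Formula.box χ} a →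
      ∃ χ, χ ∉ t ∧ Formula.imp a (Formula.box χ) ∈ KDe := by
    intro a ha
    induction ha with
    | base h => obtain ⟨χ, hχ, rfl⟩ := h; exact ⟨χ, hχ, tId _⟩
    | @or x y h1 h2 ih1 ih2 =>
      obtain ⟨χ1, hχ1, hi1⟩ := ih1
      obtain ⟨χ2, hχ2, hi2⟩ := ih2
      refine ⟨Formula.or χ1 χ2, ?_, ?_⟩
      · intro hmem; rcases ht.2.2 _ _ hmem with h | h
        exacts [hχ1 h, hχ2 h]
      · have m1 : Formula.imp x (Formula.box (Formula.or χ1 χ2)) ∈ KDe :=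
          KDe_mp (KDe_mp (tComp x (.box χ1) (.box (Formula.or χ1 χ2))) hi1)
            (KDe_mono (tOr1 χ1 χ2))
        have m2 : Formula.imp y (Formula.box (Formula.or χ1 χ2)) ∈ KDe :=
          KDe_mp (KDe_mp (tComp y (.box χ2) (.box (Formula.or χ1 χ2))) hi2)
            (KDe_mono (tOr2 χ1 χ2))
        exact KDe_mp (KDe_mp (tOrE _ _ _) m1) m2
  have hdisj : ∀ a ∈ setOf (OrCl {α | ∃ χ, χ ∉ t ∧ α = Formula.box χ}),
      a ∉ boxInv s := by
    intro a ha hmem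
    obtain ⟨χ, hχt, himp⟩ := key a ha
    have hbox : Formula.box a ∈ s := hmem
    have h2 : Formula.box (Formula.box χ) ∈ s :=
      hs.1.2 _ _ (hs.1.1 (KDe_mono himp)) hbox
    have h4 : Formula.box χ ∈ s := hs.1.2 _ _ (hs.1.1 (KDe_dense χ)) h2
    exact hχt (hst h4)
  obtain ⟨u, hp, hsub, hav⟩ := prime_extension (boxInv_isTheory hs.1)
    (setOf (OrCl {α | ∃ χ, χ ∉ t ∧ α = Formula.box χ}))
    (fun a ha b hb => OrCl.or ha hb)
    ⟨Formula.box .falsum, OrCl.base ⟨.falsum, ht.2.1, rfl⟩⟩ hdisj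
  refine ⟨u, hp, hsub, ?_⟩
  intro χ hχ
  by_contra hnt
  exact hav _ (OrCl.base ⟨χ, hnt, rfl⟩) hχ

end Aux

lemma tipOf_false_iff {n : ℕ} (ψs : Fin n → Formula) (s : Set Formula) (i : Fin n) :
    tipOf ψs s i = false ↔ ψs i ∉ s := by
  simp [tipOf]

lemma tip_mem_sigmaW {n : ℕ} (ψs : Fin n → Formula) {W : Set (Fin n → Bool)}
    {R : (Fin n → Bool) → (Fin n → Bool) → Prop} (hclip : IsClip ψs W R)
    {s : Set Formula} (hs : IsPrime KDe s) : tipOf ψs s ∈ sigmaW ψs W R := by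
  refine ⟨hclip.tmem s hs, ?_⟩
  intro i j hij hfalse
  have hbox : Formula.box (ψs j) ∉ s := by
    rw [tipOf_false_iff] at hfalse
    rw [hij] at hfalse
    exact hfalse
  obtain ⟨t, ht, hsub, hχ⟩ := exists_prime_not hs (ψs j) hbox
  refine ⟨tipOf ψs t, hclip.tmem t ht, hclip.tedge s t hs ht hsub, ?_⟩
  rw [tipOf_false_iff]
  exact hχ

/-- For every `φ`-clip `(W,R)`, `σ_φ(W,R)` is again a `φ`-clip and
`σ_φ(W,R) ≪_φ (W,R)`. -/
theorem stmt10 (φ : Formula) {n : ℕ} (ψs : Fin n → Formula) (henum : IsEnum φ ψs)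
    (W : Set (Fin n → Bool)) (R : (Fin n → Bool) → (Fin n → Bool) → Prop)
    (hclip : IsClip ψs W R) :
    IsClip ψs (sigmaW ψs W R) (sigmaR ψs W R) ∧
    sigmaW ψs W R ⊆ W ∧ (∀ a b, sigmaR ψs W R a b → R a b) := by
  refine ⟨⟨?_, ?_, ?_, ?_, ?_⟩, ?_, ?_⟩
  · intro a ha
    exact hclip.wsub ha.1
  · intro a b hab
    exact ⟨hab.1, hab.2.1⟩
  · intro a b hab
    exact hclip.rsub a b hab.2.2.1
  · intro s hs
    exact tip_mem_sigmaW ψs hclip hs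
  · intro s t hs ht hst
    obtain ⟨u, hu, hsu, hut⟩ := exists_prime_between hs ht hst
    refine ⟨tip_mem_sigmaW ψs hclip hs, tip_mem_sigmaW ψs hclip ht,
      hclip.tedge s t hs ht hst,
      tipOf ψs u, hclip.tmem u hu, hclip.tedge s u hs hu hsu,
      hclip.tedge u t hu ht hut⟩
  · intro a ha
    exact ha.1
  · intro a b hab
    exact hab.2.2.1
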